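/- Suppose for some μ ≥ −k₀⁴ and some ζ ∈ (0,1) there exists a continuous positive function y : [0,1] → ℝ which is C¹ on [0,ζ] and on [ζ,1] (with possibly different one-sided derivatives at ζ), twice differentiable with −y'' = μ y on (0,ζ) ∪ (ζ,1), and satisfies y'(0) − k₀² y(0) = 0, 2 y'(ζ−0) − y(ζ) = 0, 2 y'(ζ+0) + y(ζ) = 0, y'(1) + k₁² y(1) = 0. Then inf{λ₁(q) : q ∈ L¹[0,1], q ≤ 0 a.e., ∫₀¹ q dx = −1} = μ, and moreover μ = inf{ (∫₀¹ y'(x)² dx − y(ζ)² + k₀² y(0)² + k₁² y(1)²) / ∫₀¹ y(x)² dx : y a test function not a.e. zero } (i.e. the infimum is attained at the extended potential −δ_ζ). -/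

import Mathlib

open MeasureTheory Set Real Filter

/-- A test function on `[0,1]`: `y` is absolutely continuous on `[0,1]` with
derivative `g` belonging to `L²[0,1]`. -/
def IsTest (y g : ℝ → ℝ) : Prop :=
  (∀ x ∈ Icc (0:ℝ) 1, y x = y 0 + ∫ t in (0:ℝ)..x, g t) ∧
  IntegrableOn g (Icc (0:ℝ) 1) ∧
  IntegrableOn (fun x => (g x) ^ 2) (Icc (0:ℝ) 1)

/-- The set of Rayleigh quotients of test functions for the Sturm–Liouville problem
`-y'' + q y = λ y`, `y'(0) - k₀² y(0) = 0`, `y'(1) + k₁² y(1) = 0`. -/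
def RayleighSet (k0 k1 : ℝ) (q : ℝ → ℝ) : Set ℝ :=
  { r : ℝ | ∃ y g : ℝ → ℝ, IsTest y g ∧ (0 < ∫ x in (0:ℝ)..1, (y x) ^ 2) ∧
      r = ((∫ x in (0:ℝ)..1, ((g x) ^ 2 + q x * (y x) ^ 2))
            + k0 ^ 2 * (y 0) ^ 2 + k1 ^ 2 * (y 1) ^ 2) / (∫ x in (0:ℝ)..1, (y x) ^ 2) }

/-- The first eigenvalue `λ₁(q)` defined as the infimum of the Rayleigh quotient. -/
noncomputable def lam1 (k0 k1 : ℝ) (q : ℝ → ℝ) : ℝ :=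
  sInf (RayleighSet k0 k1 q)

/-- Existence of a continuous positive solution of `-y'' = μ y` on `(0,ζ) ∪ (ζ,1)` that is
`C¹` on `[0,ζ]` and on `[ζ,1]` (with possibly different one-sided derivatives `dL ζ`, `dR ζ`
at `ζ`), satisfying `y'(0) - k₀² y(0) = 0`, `2 y'(ζ-0) - y(ζ) = 0`, `2 y'(ζ+0) + y(ζ) = 0`
and `y'(1) + k₁² y(1) = 0`. -/
def BrokenSol (k0 k1 μ ζ : ℝ) : Prop :=
  ∃ y dL dR : ℝ → ℝ,
    ContinuousOn y (Icc (0:ℝ) 1) ∧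
    (∀ x ∈ Icc (0:ℝ) 1, 0 < y x) ∧
    (∀ x ∈ Icc (0:ℝ) ζ, HasDerivWithinAt y (dL x) (Icc (0:ℝ) ζ) x) ∧
    (∀ x ∈ Icc ζ (1:ℝ), HasDerivWithinAt y (dR x) (Icc ζ (1:ℝ)) x) ∧
    ContinuousOn dL (Icc (0:ℝ) ζ) ∧
    ContinuousOn dR (Icc ζ (1:ℝ)) ∧
    (∀ x ∈ Ioo (0:ℝ) ζ, HasDerivWithinAt dL (-(μ * y x)) (Icc (0:ℝ) ζ) x) ∧
    (∀ x ∈ Ioo ζ (1:ℝ), HasDerivWithinAt dR (-(μ * y x)) (Icc ζ (1:ℝ)) x) ∧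
    dL 0 - k0 ^ 2 * y 0 = 0 ∧
    2 * dL ζ - y ζ = 0 ∧
    2 * dR ζ + y ζ = 0 ∧
    dR 1 + k1 ^ 2 * y 1 = 0

open Topology

/-!
For the positive broken solution `y`, the logarithmic derivative `w = y'/y` solves the Riccati
equation `w' = -μ - w²` on `[0,ζ]` and on `[ζ,1]`, with `w = k₀²` at `0`, `w = ±1/2` at `ζ∓0` and
`w = -k₁²` at `1`. Comparing with the constant solutions `±1/2` (which needs `μ ≥ -1/4`, a
consequence of `-k₀⁴ ≤ μ`) gives `w ≥ 1/2` on `[0,ζ]` and `w ≤ -1/2` on `[ζ,1]`. Picone's identity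
with the weight `w`, shifted by `∓1` between `ζ` and an arbitrary point `z`, then yields
`μ ∫ u² ≤ ∫ u'² - u(z)² + k₀² u(0)² + k₁² u(1)²` for every test function `u`, with equality for
`u = y`, `z = ζ`. Choosing `z` where `u²` is maximal gives `∫ q u² ≥ -u(z)²`, hence `λ₁(q) ≥ μ`;
conversely the potentials `-t⁻¹ 1_(ζ, ζ+t]` tend to `-δ_ζ` and their Rayleigh quotients at `y` tend
to `μ`.
-/

theorem uIcc_subset_uIcc_of_le {α : Type*} [Lattice α] {a b c d : α} (hab : a ≤ b) (hbc : b ≤ c)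
    (hcd : c ≤ d) : uIcc b c ⊆ uIcc a d :=
  uIcc_subset_uIcc (mem_uIcc_of_le hab (hbc.trans hcd)) (mem_uIcc_of_le (hab.trans hbc) hcd)

theorem AbsolutelyContinuousOnInterval.congr {X : Type*} [PseudoMetricSpace X] {f g : ℝ → X}
    {a b : ℝ} (hf : AbsolutelyContinuousOnInterval f a b) (hfg : EqOn f g (uIcc a b)) :
    AbsolutelyContinuousOnInterval g a b := by
  refine hf.congr' ?_
  filter_upwards [eventually_inf_principal.mpr (Eventually.of_forall fun _ hE => hE)]
    with E hE
  exact Finset.sum_congr rfl fun i hi => by rw [hfg (hE.1 i hi).1, hfg (hE.1 i hi).2]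

theorem absolutelyContinuousOnInterval_const {X : Type*} [PseudoMetricSpace X] (c : X)
    (a b : ℝ) : AbsolutelyContinuousOnInterval (fun _ : ℝ => c) a b :=
  (LipschitzWith.const c).lipschitzOnWith.absolutelyContinuousOnInterval

theorem absolutelyContinuousOnInterval_of_eq_add_integral {u g : ℝ → ℝ} {a b : ℝ}
    (hg : IntervalIntegrable g volume a b) (hu : ∀ x ∈ uIcc a b, u x = u a + ∫ t in a..x, g t) :
    AbsolutelyContinuousOnInterval u a b :=
  ((absolutelyContinuousOnInterval_const (u a) a b).fun_add
    (hg.absolutelyContinuousOnInterval_intervalIntegral left_mem_uIcc)).congr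
    fun x hx => (hu x hx).symm

theorem ae_hasDerivAt_of_eq_add_integral {u g : ℝ → ℝ} {a b : ℝ}
    (hg : IntervalIntegrable g volume a b) (hu : ∀ x ∈ Icc a b, u x = u a + ∫ t in a..x, g t) :
    ∀ᵐ x, x ∈ Ioo a b → HasDerivAt u (g x) x := by
  filter_upwards [hg.ae_hasDerivAt_integral] with x hx hxab
  have hx' : x ∈ uIcc a b := uIcc_of_le (hxab.1.le.trans hxab.2.le) ▸ Ioo_subset_Icc_self hxab
  refine ((hx hx' a left_mem_uIcc).const_add (u a)).congr_of_eventuallyEq ?_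
  filter_upwards [Icc_mem_nhds hxab.1 hxab.2] with t ht using hu t ht

theorem eq_add_integral_of_hasDerivAt {f f' : ℝ → ℝ} {a b : ℝ}
    (hf : ContinuousOn f (Icc a b)) (hd : ∀ x ∈ Ioo a b, HasDerivAt f (f' x) x)
    (hf' : IntervalIntegrable f' volume a b) :
    ∀ x ∈ Icc a b, f x = f a + ∫ t in a..x, f' t := by
  intro x hx
  rw [intervalIntegral.integral_eq_sub_of_hasDerivAt_of_le hx.1
    (hf.mono (Icc_subset_Icc le_rfl hx.2)) (fun t ht => hd t ⟨ht.1, ht.2.trans_le hx.2⟩)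
    (hf'.mono_set (uIcc_subset_uIcc_of_le le_rfl hx.1 hx.2))]
  ring

theorem absolutelyContinuousOnInterval_of_hasDerivAt {f f' : ℝ → ℝ} {a b : ℝ} (hab : a ≤ b)
    (hf : ContinuousOn f (Icc a b)) (hd : ∀ x ∈ Ioo a b, HasDerivAt f (f' x) x)
    (hf' : IntervalIntegrable f' volume a b) :
    AbsolutelyContinuousOnInterval f a b :=
  absolutelyContinuousOnInterval_of_eq_add_integral hf'
    (uIcc_of_le hab ▸ eq_add_integral_of_hasDerivAt hf hd hf')

def IsTestOn (u g : ℝ → ℝ) (a b : ℝ) : Prop :=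
  AbsolutelyContinuousOnInterval u a b ∧ (∀ᵐ x, x ∈ Ioo a b → HasDerivAt u (g x) x) ∧
    IntervalIntegrable (fun x => g x ^ 2) volume a b

def IsRiccatiSubsolution (μ : ℝ) (W : ℝ → ℝ) (a b : ℝ) : Prop :=
  AbsolutelyContinuousOnInterval W a b ∧
    ∀ᵐ x, x ∈ Ioo a b → ∃ W', HasDerivAt W W' x ∧ W' + W x ^ 2 ≤ -μ

theorem IsTest.isTestOn {u g : ℝ → ℝ} (h : IsTest u g) : IsTestOn u g 0 1 := by
  obtain ⟨hu, hg, hg2⟩ := h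
  have h01 : (0:ℝ) ≤ 1 := zero_le_one
  have hgi : IntervalIntegrable g volume 0 1 :=
    (intervalIntegrable_iff_integrableOn_Icc_of_le h01).2 hg
  exact ⟨absolutelyContinuousOnInterval_of_eq_add_integral hgi (uIcc_of_le h01 ▸ hu),
    ae_hasDerivAt_of_eq_add_integral hgi hu,
    (intervalIntegrable_iff_integrableOn_Icc_of_le h01).2 hg2⟩

theorem IsTest.continuousOn {u g : ℝ → ℝ} (h : IsTest u g) : ContinuousOn u (Icc 0 1) :=
  uIcc_of_le (zero_le_one (α := ℝ)) ▸ h.isTestOn.1.continuousOn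

theorem IsTest.integral_sq_add_mul_sq {u g q : ℝ → ℝ} (hu : IsTest u g)
    (hq : IntegrableOn q (Icc 0 1)) :
    ∫ x in (0:ℝ)..1, (g x ^ 2 + q x * u x ^ 2)
      = (∫ x in (0:ℝ)..1, g x ^ 2) + ∫ x in (0:ℝ)..1, q x * u x ^ 2 :=
  intervalIntegral.integral_add hu.isTestOn.2.2
    ((intervalIntegrable_iff_integrableOn_Icc_of_le zero_le_one).2
      (hq.mul_continuousOn (hu.continuousOn.pow 2) isCompact_Icc))

theorem IsTestOn.mono {u g : ℝ → ℝ} {a b c d : ℝ} (h : IsTestOn u g a d) (hab : a ≤ b)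
    (hbc : b ≤ c) (hcd : c ≤ d) : IsTestOn u g b c :=
  ⟨h.1.mono (uIcc_subset_uIcc_of_le hab hbc hcd),
    h.2.1.mono fun _ hx hxbc => hx (Ioo_subset_Ioo hab hcd hxbc),
    h.2.2.mono_set (uIcc_subset_uIcc_of_le hab hbc hcd)⟩

theorem IsRiccatiSubsolution.mono {μ : ℝ} {W : ℝ → ℝ} {a b c d : ℝ}
    (h : IsRiccatiSubsolution μ W a d) (hab : a ≤ b) (hbc : b ≤ c) (hcd : c ≤ d) :
    IsRiccatiSubsolution μ W b c :=
  ⟨h.1.mono (uIcc_subset_uIcc_of_le hab hbc hcd),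
    h.2.mono fun _ hx hxbc => hx (Ioo_subset_Ioo hab hcd hxbc)⟩

/-- Picone's identity: `(g - W u)² ≥ 0` and `W' + W² ≤ -μ` give `μ u² + (W u²)' ≤ g²` a.e. -/
theorem IsTestOn.mul_integral_sq_add_le {μ a b : ℝ} {u g W : ℝ → ℝ} (hab : a ≤ b)
    (hu : IsTestOn u g a b) (hW : IsRiccatiSubsolution μ W a b) :
    μ * (∫ x in a..b, u x ^ 2) + (W b * u b ^ 2 - W a * u a ^ 2) ≤ ∫ x in a..b, g x ^ 2 := by
  obtain ⟨hac, hderiv, hg2⟩ := hu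
  have hF : AbsolutelyContinuousOnInterval (fun x => W x * (u x * u x)) a b :=
    hW.1.fun_mul (hac.fun_mul hac)
  have hu2 : IntervalIntegrable (fun x => μ * u x ^ 2) volume a b :=
    ((hac.continuousOn.pow 2).const_smul μ).intervalIntegrable
  have hpt : ∀ᵐ x, x ∈ Ioo a b →
      μ * u x ^ 2 + deriv (fun x => W x * (u x * u x)) x ≤ g x ^ 2 := by
    filter_upwards [hderiv, hW.2] with x hux hWx hx
    obtain ⟨W', hW', hric⟩ := hWx hx
    rw [(hW'.fun_mul ((hux hx).fun_mul (hux hx))).deriv]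
    nlinarith [sq_nonneg (g x - W x * u x), sq_nonneg (u x)]
  have hmono := intervalIntegral.integral_mono_ae_restrict hab
    (hu2.add hF.intervalIntegrable_deriv) hg2 (by
      rwa [EventuallyLE, ← Measure.restrict_congr_set Ioo_ae_eq_Icc,
        ae_restrict_iff' measurableSet_Ioo])
  rw [intervalIntegral.integral_add hu2 hF.intervalIntegrable_deriv, hF.integral_deriv_eq_sub,
    intervalIntegral.integral_const_mul] at hmono
  simpa only [sq] using hmono

theorem IsTestOn.mul_integral_sq_add_le_of_three {μ a b c d : ℝ} {u g W₁ W₂ W₃ : ℝ → ℝ}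
    (hab : a ≤ b) (hbc : b ≤ c) (hcd : c ≤ d) (hu : IsTestOn u g a d)
    (hW₁ : IsRiccatiSubsolution μ W₁ a b) (hW₂ : IsRiccatiSubsolution μ W₂ b c)
    (hW₃ : IsRiccatiSubsolution μ W₃ c d) :
    μ * (∫ x in a..d, u x ^ 2) + (W₃ d * u d ^ 2 - W₁ a * u a ^ 2)
      + (W₁ b - W₂ b) * u b ^ 2 + (W₂ c - W₃ c) * u c ^ 2 ≤ ∫ x in a..d, g x ^ 2 := by
  have h₁ := (hu.mono le_rfl hab (hbc.trans hcd)).mul_integral_sq_add_le hab hW₁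
  have h₂ := (hu.mono hab hbc hcd).mul_integral_sq_add_le hbc hW₂
  have h₃ := (hu.mono (hab.trans hbc) hcd le_rfl).mul_integral_sq_add_le hcd hW₃
  have hsplit : ∀ f : ℝ → ℝ, IntervalIntegrable f volume a d →
      ∫ x in a..d, f x = (∫ x in a..b, f x) + (∫ x in b..c, f x) + ∫ x in c..d, f x := by
    intro f hf
    have hsub : ∀ {p q}, a ≤ p → p ≤ q → q ≤ d → IntervalIntegrable f volume p q :=
      fun hp hpq hq => hf.mono_set (uIcc_subset_uIcc_of_le hp hpq hq)
    rw [intervalIntegral.integral_add_adjacent_intervals (hsub le_rfl hab (hbc.trans hcd))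
        (hsub hab hbc hcd),
      intervalIntegral.integral_add_adjacent_intervals (hsub le_rfl (hab.trans hbc) hcd)
        (hsub (hab.trans hbc) hcd le_rfl)]
  rw [hsplit (fun x => u x ^ 2) (hu.1.continuousOn.pow 2).intervalIntegrable, hsplit _ hu.2.2]
  linarith

def IsRiccatiSolution (μ : ℝ) (w : ℝ → ℝ) (a b : ℝ) : Prop :=
  ContinuousOn w (Icc a b) ∧ ∀ x ∈ Ioo a b, HasDerivAt w (-μ - w x ^ 2) x

namespace IsRiccatiSolution

variable {μ a b : ℝ} {w : ℝ → ℝ}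

theorem isRiccatiSubsolution_add_const (hab : a ≤ b) (h : IsRiccatiSolution μ w a b) {s : ℝ}
    (hs : ∀ x ∈ Ioo a b, (w x + s) ^ 2 ≤ w x ^ 2) :
    IsRiccatiSubsolution μ (fun x => w x + s) a b := by
  have hw : AbsolutelyContinuousOnInterval w a b :=
    absolutelyContinuousOnInterval_of_hasDerivAt hab h.1 h.2
      ((continuousOn_const.sub (h.1.pow 2)).intervalIntegrable_of_Icc hab)
  refine ⟨hw.fun_add (absolutelyContinuousOnInterval_const s a b), ae_of_all _ fun x hx => ?_⟩
  exact ⟨_, (h.2 x hx).add_const s, by linarith [hs x hx]⟩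

theorem isRiccatiSubsolution (hab : a ≤ b) (h : IsRiccatiSolution μ w a b) :
    IsRiccatiSubsolution μ w a b := by
  simpa using h.isRiccatiSubsolution_add_const hab (s := 0) fun x _ => by simp

theorem hasDerivAt_sub_mul_exp (h : IsRiccatiSolution μ w a b) (c : ℝ) {x : ℝ}
    (hx : x ∈ Ioo a b) :
    HasDerivAt (fun x => (w x - c) * exp (∫ t in a..x, (w t + c)))
      ((-μ - c ^ 2) * exp (∫ t in a..x, (w t + c))) x := by
  have hwc : ContinuousOn (fun t => w t + c) (Icc a b) := h.1.add continuousOn_const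
  have hP : HasDerivAt (fun x => ∫ t in a..x, (w t + c)) (w x + c) x :=
    intervalIntegral.integral_hasDerivAt_right
      ((hwc.mono (Icc_subset_Icc le_rfl hx.2.le)).intervalIntegrable_of_Icc hx.1.le)
      ((hwc.mono Ioo_subset_Icc_self).stronglyMeasurableAtFilter isOpen_Ioo x hx)
      (hwc.continuousAt (Icc_mem_nhds hx.1 hx.2))
  exact (((h.2 x hx).sub_const c).fun_mul hP.exp).congr_deriv (by ring)

theorem continuousOn_sub_mul_exp (hab : a ≤ b) (h : IsRiccatiSolution μ w a b) (c : ℝ) :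
    ContinuousOn (fun x => (w x - c) * exp (∫ t in a..x, (w t + c))) (Icc a b) := by
  have hP := intervalIntegral.continuousOn_primitive_interval (μ := volume) (a := a) (b := b)
    (f := fun t => w t + c) ((h.1.add continuousOn_const).integrableOn_Icc.mono_set
      (uIcc_of_le hab).subset)
  rw [uIcc_of_le hab] at hP
  exact (h.1.sub continuousOn_const).mul (continuous_exp.comp_continuousOn hP)

theorem antitoneOn_sub_mul_exp (hab : a ≤ b) (h : IsRiccatiSolution μ w a b) {c : ℝ}
    (hc : -μ ≤ c ^ 2) :
    AntitoneOn (fun x => (w x - c) * exp (∫ t in a..x, (w t + c))) (Icc a b) := by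
  refine antitoneOn_of_hasDerivWithinAt_nonpos (convex_Icc a b) (h.continuousOn_sub_mul_exp hab c)
    (fun x hx => (h.hasDerivAt_sub_mul_exp c (by rwa [interior_Icc] at hx)).hasDerivWithinAt)
    fun x _ => mul_nonpos_of_nonpos_of_nonneg (by linarith) (exp_pos _).le

theorem strictMonoOn_sub_mul_exp (hab : a ≤ b) (h : IsRiccatiSolution μ w a b) {c : ℝ}
    (hc : c ^ 2 < -μ) :
    StrictMonoOn (fun x => (w x - c) * exp (∫ t in a..x, (w t + c))) (Icc a b) := by
  refine strictMonoOn_of_hasDerivWithinAt_pos (convex_Icc a b) (h.continuousOn_sub_mul_exp hab c)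
    (fun x hx => (h.hasDerivAt_sub_mul_exp c (by rwa [interior_Icc] at hx)).hasDerivWithinAt)
    fun x _ => mul_pos (by linarith) (exp_pos _)

theorem le_of_eq_right (hab : a ≤ b) (h : IsRiccatiSolution μ w a b) {c : ℝ}
    (hc : -μ ≤ c ^ 2) (hwb : w b = c) {x : ℝ} (hx : x ∈ Icc a b) : c ≤ w x := by
  have := h.antitoneOn_sub_mul_exp hab hc hx (right_mem_Icc.2 hab) hx.2
  simp only [hwb, sub_self, zero_mul] at this
  linarith [nonneg_of_mul_nonneg_left this (exp_pos _)]

theorem le_of_eq_left (hab : a ≤ b) (h : IsRiccatiSolution μ w a b) {c : ℝ}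
    (hc : -μ ≤ c ^ 2) (hwa : w a = c) {x : ℝ} (hx : x ∈ Icc a b) : w x ≤ c := by
  have := h.antitoneOn_sub_mul_exp hab hc (left_mem_Icc.2 hab) hx hx.1
  simp only [hwa, sub_self, zero_mul] at this
  linarith [nonpos_of_mul_nonpos_left this (exp_pos _)]

theorem lt_of_eq_right (hab : a < b) (h : IsRiccatiSolution μ w a b) {c : ℝ}
    (hc : c ^ 2 < -μ) (hwb : w b = c) : w a < c := by
  have := h.strictMonoOn_sub_mul_exp hab.le hc (left_mem_Icc.2 hab.le) (right_mem_Icc.2 hab.le) hab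
  simp only [hwb, sub_self, zero_mul, intervalIntegral.integral_same, exp_zero, mul_one] at this
  linarith

end IsRiccatiSolution

section Piecewise

variable {f g : ℝ → ℝ} {a b c : ℝ}

theorem eqOn_ite_le_left (hab : a ≤ b) :
    EqOn f (fun x => if x ≤ b then f x else g x) (uIoc a b) := fun _ hx =>
  (if_pos (uIoc_of_le hab ▸ hx).2).symm

theorem eqOn_ite_le_right (hbc : b ≤ c) :
    EqOn g (fun x => if x ≤ b then f x else g x) (uIoc b c) := fun _ hx =>
  (if_neg (not_le.2 (uIoc_of_le hbc ▸ hx).1)).symm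

theorem IntervalIntegrable.ite_le (hab : a ≤ b) (hbc : b ≤ c)
    (hf : IntervalIntegrable f volume a b) (hg : IntervalIntegrable g volume b c) :
    IntervalIntegrable (fun x => if x ≤ b then f x else g x) volume a c :=
  (hf.congr (eqOn_ite_le_left hab)).trans (hg.congr (eqOn_ite_le_right hbc))

theorem intervalIntegral.integral_ite_le (hab : a ≤ b) (hbc : b ≤ c)
    (hf : IntervalIntegrable f volume a b) (hg : IntervalIntegrable g volume b c) :
    ∫ x in a..c, (if x ≤ b then f x else g x) = (∫ x in a..b, f x) + ∫ x in b..c, g x := by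
  rw [← intervalIntegral.integral_add_adjacent_intervals (hf.congr (eqOn_ite_le_left hab))
    (hg.congr (eqOn_ite_le_right hbc)),
    intervalIntegral.integral_congr_ae (ae_of_all _ (eqOn_ite_le_left hab).symm),
    intervalIntegral.integral_congr_ae (ae_of_all _ (eqOn_ite_le_right hbc).symm)]

theorem eq_add_integral_ite_le {y : ℝ → ℝ} (hab : a ≤ b) (hf : IntervalIntegrable f volume a b)
    (hg : IntervalIntegrable g volume b c) (hyf : ∀ x ∈ Icc a b, y x = y a + ∫ t in a..x, f t)
    (hyg : ∀ x ∈ Icc b c, y x = y b + ∫ t in b..x, g t) :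
    ∀ x ∈ Icc a c, y x = y a + ∫ t in a..x, (if t ≤ b then f t else g t) := by
  intro x hx
  rcases le_total x b with hxb | hbx
  · rw [intervalIntegral.integral_congr fun t ht => if_pos ((uIcc_of_le hx.1 ▸ ht).2.trans hxb)]
    exact hyf x ⟨hx.1, hxb⟩
  · rw [intervalIntegral.integral_ite_le hab hbx hf
      (hg.mono_set (uIcc_subset_uIcc_of_le le_rfl hbx hx.2)), hyg x ⟨hbx, hx.2⟩,
      hyf b ⟨hab, le_rfl⟩]
    ring

end Piecewise

def IsSolutionOn (μ : ℝ) (y y' : ℝ → ℝ) (a b : ℝ) : Prop :=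
  ContinuousOn y (Icc a b) ∧ ContinuousOn y' (Icc a b) ∧
    (∀ x ∈ Ioo a b, HasDerivAt y (y' x) x) ∧ ∀ x ∈ Ioo a b, HasDerivAt y' (-(μ * y x)) x

namespace IsSolutionOn

variable {μ a b : ℝ} {y y' : ℝ → ℝ}

theorem of_hasDerivWithinAt (hy' : ContinuousOn y' (Icc a b))
    (hdy : ∀ x ∈ Icc a b, HasDerivWithinAt y (y' x) (Icc a b) x)
    (hdy' : ∀ x ∈ Ioo a b, HasDerivWithinAt y' (-(μ * y x)) (Icc a b) x) :
    IsSolutionOn μ y y' a b :=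
  ⟨fun x hx => (hdy x hx).continuousWithinAt, hy',
    fun x hx => (hdy x (Ioo_subset_Icc_self hx)).hasDerivAt (Icc_mem_nhds hx.1 hx.2),
    fun x hx => (hdy' x hx).hasDerivAt (Icc_mem_nhds hx.1 hx.2)⟩

theorem eq_add_integral (hab : a ≤ b) (h : IsSolutionOn μ y y' a b) :
    ∀ x ∈ Icc a b, y x = y a + ∫ t in a..x, y' t :=
  eq_add_integral_of_hasDerivAt h.1 h.2.2.1 (h.2.1.intervalIntegrable_of_Icc hab)

theorem isRiccatiSolution_div (h : IsSolutionOn μ y y' a b) (hpos : ∀ x ∈ Icc a b, 0 < y x) :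
    IsRiccatiSolution μ (fun x => y' x / y x) a b := by
  refine ⟨h.2.1.div h.1 fun x hx => (hpos x hx).ne', fun x hx => ?_⟩
  have hyx : y x ≠ 0 := (hpos x (Ioo_subset_Icc_self hx)).ne'
  refine ((h.2.2.2 x hx).div (h.2.2.1 x hx) hyx).congr_deriv ?_
  field_simp

theorem integral_sq_deriv_sub_eq (hab : a ≤ b) (h : IsSolutionOn μ y y' a b) :
    (∫ x in a..b, y' x ^ 2) - μ * ∫ x in a..b, y x ^ 2 = y' b * y b - y' a * y a := by
  have hy'2 : IntervalIntegrable (fun x => y' x ^ 2) volume a b :=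
    (h.2.1.pow 2).intervalIntegrable_of_Icc hab
  have hy2 : IntervalIntegrable (fun x => y x ^ 2) volume a b :=
    (h.1.pow 2).intervalIntegrable_of_Icc hab
  rw [← intervalIntegral.integral_const_mul, ← intervalIntegral.integral_sub hy'2
    (hy2.const_mul μ)]
  exact intervalIntegral.integral_eq_sub_of_hasDerivAt_of_le hab (h.2.1.mul h.1)
    (fun x hx => ((h.2.2.2 x hx).mul (h.2.2.1 x hx)).congr_deriv (by ring))
    (hy'2.sub (hy2.const_mul μ))

end IsSolutionOn

theorem integral_mul_ge_of_nonpos {q f : ℝ → ℝ} {a b M : ℝ} (hab : a ≤ b)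
    (hq : IntegrableOn q (Icc a b)) (hq0 : ∀ᵐ x ∂(volume.restrict (Icc a b)), q x ≤ 0)
    (hf : ContinuousOn f (Icc a b)) (hfM : ∀ x ∈ Icc a b, f x ≤ M) :
    M * ∫ x in a..b, q x ≤ ∫ x in a..b, q x * f x := by
  have hqi := (intervalIntegrable_iff_integrableOn_Icc_of_le hab).2 hq
  rw [← intervalIntegral.integral_const_mul]
  refine intervalIntegral.integral_mono_ae_restrict hab (hqi.const_mul M)
    ((intervalIntegrable_iff_integrableOn_Icc_of_le hab).2
      (hq.mul_continuousOn hf isCompact_Icc)) ?_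
  filter_upwards [hq0, ae_restrict_mem measurableSet_Icc] with x hqx hx
  rw [mul_comm M]
  exact mul_le_mul_of_nonpos_left (hfM x hx) hqx

theorem RayleighSet.nonempty (k0 k1 : ℝ) (q : ℝ → ℝ) : (RayleighSet k0 k1 q).Nonempty :=
  ⟨_, fun _ => 1, fun _ => 0, ⟨by simp, by simp, by simp⟩, by simp, rfl⟩

/-- Approximations of `-δ_ζ` as `t → 0+`. -/
noncomputable def negBump (ζ t : ℝ) : ℝ → ℝ := (Ioc ζ (ζ + t)).indicator fun _ => -t⁻¹

theorem integrableOn_negBump (ζ t : ℝ) (s : Set ℝ) : IntegrableOn (negBump ζ t) s :=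
  ((integrableOn_const measure_Ioc_lt_top.ne).integrable_indicator measurableSet_Ioc).integrableOn

theorem negBump_nonpos {ζ t : ℝ} (ht : 0 ≤ t) (x : ℝ) : negBump ζ t x ≤ 0 :=
  indicator_nonpos (fun _ _ => neg_nonpos.2 (inv_nonneg.2 ht)) x

theorem integral_negBump_mul {ζ t a b : ℝ} (ha : a ≤ ζ) (ht : 0 ≤ t) (hb : ζ + t ≤ b)
    (f : ℝ → ℝ) :
    ∫ x in a..b, negBump ζ t x * f x = -t⁻¹ * ∫ x in ζ..ζ + t, f x := by
  have hind : (fun x => negBump ζ t x * f x) = (Ioc ζ (ζ + t)).indicator fun x => -t⁻¹ * f x := by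
    ext x
    simp only [negBump, indicator_mul_left]
  rw [intervalIntegral.integral_of_le (ha.trans ((le_add_of_nonneg_right ht).trans hb)), hind,
    integral_indicator measurableSet_Ioc, Measure.restrict_restrict measurableSet_Ioc,
    inter_eq_left.2 (Ioc_subset_Ioc ha hb), integral_const_mul,
    intervalIntegral.integral_of_le (le_add_of_nonneg_right ht)]

theorem tendsto_integral_negBump_mul {f : ℝ → ℝ} {a b ζ : ℝ} (hζ : ζ ∈ Ioo a b)
    (hf : ContinuousOn f (Icc a b)) :
    Tendsto (fun t => ∫ x in a..b, negBump ζ t x * f x) (𝓝[>] 0) (𝓝 (-f ζ)) := by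
  have hF : HasDerivAt (fun s => ∫ x in ζ..s, f x) (f ζ) ζ :=
    intervalIntegral.integral_hasDerivAt_right IntervalIntegrable.refl
      ((hf.mono Ioo_subset_Icc_self).stronglyMeasurableAtFilter isOpen_Ioo ζ hζ)
      (hf.continuousAt (Icc_mem_nhds hζ.1 hζ.2))
  refine hF.tendsto_slope_zero_right.neg.congr' ?_
  filter_upwards [Ioo_mem_nhdsGT (sub_pos.2 hζ.2)] with t ht
  rw [integral_negBump_mul hζ.1.le ht.1.le (by linarith [ht.2]), intervalIntegral.integral_same,
    sub_zero, smul_eq_mul, neg_mul]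

namespace BrokenSol

variable {k0 k1 μ ζ : ℝ}

theorem exists_isSolutionOn (h : BrokenSol k0 k1 μ ζ) :
    ∃ y dL dR : ℝ → ℝ, ContinuousOn y (Icc 0 1) ∧ (∀ x ∈ Icc (0:ℝ) 1, 0 < y x) ∧
      IsSolutionOn μ y dL 0 ζ ∧ IsSolutionOn μ y dR ζ 1 ∧
      dL 0 - k0 ^ 2 * y 0 = 0 ∧ 2 * dL ζ - y ζ = 0 ∧ 2 * dR ζ + y ζ = 0 ∧
      dR 1 + k1 ^ 2 * y 1 = 0 := by
  obtain ⟨y, dL, dR, hy, hpos, hdyL, hdyR, hdLc, hdRc, hddL, hddR, hbc⟩ := h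
  exact ⟨y, dL, dR, hy, hpos, .of_hasDerivWithinAt hdLc hdyL hddL,
    .of_hasDerivWithinAt hdRc hdyR hddR, hbc⟩

theorem exists_riccati (hζ : ζ ∈ Icc (0:ℝ) 1) (h : BrokenSol k0 k1 μ ζ) :
    ∃ wL wR : ℝ → ℝ, IsRiccatiSolution μ wL 0 ζ ∧ IsRiccatiSolution μ wR ζ 1 ∧
      wL 0 = k0 ^ 2 ∧ wL ζ = 1 / 2 ∧ wR ζ = -(1 / 2) ∧ wR 1 = -k1 ^ 2 := by
  obtain ⟨y, dL, dR, -, hpos, hL, hR, h0, hζL, hζR, h1⟩ := h.exists_isSolutionOn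
  have hposL : ∀ x ∈ Icc 0 ζ, 0 < y x := fun x hx => hpos x ⟨hx.1, hx.2.trans hζ.2⟩
  have hposR : ∀ x ∈ Icc ζ 1, 0 < y x := fun x hx => hpos x ⟨hζ.1.trans hx.1, hx.2⟩
  refine ⟨_, _, hL.isRiccatiSolution_div hposL, hR.isRiccatiSolution_div hposR, ?_, ?_, ?_, ?_⟩
  · rw [div_eq_iff (hposL 0 ⟨le_rfl, hζ.1⟩).ne']; linarith
  · rw [div_eq_iff (hposL ζ ⟨hζ.1, le_rfl⟩).ne']; linarith
  · rw [div_eq_iff (hposR ζ ⟨le_rfl, hζ.2⟩).ne']; linarith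
  · rw [div_eq_iff (hposR 1 ⟨hζ.2, le_rfl⟩).ne']; linarith

theorem exists_rayleigh_eq (hζ : ζ ∈ Icc (0:ℝ) 1) (h : BrokenSol k0 k1 μ ζ) :
    ∃ u g : ℝ → ℝ, IsTest u g ∧ 0 < ∫ x in (0:ℝ)..1, u x ^ 2 ∧
      (∫ x in (0:ℝ)..1, g x ^ 2) - u ζ ^ 2 + k0 ^ 2 * u 0 ^ 2 + k1 ^ 2 * u 1 ^ 2
        = μ * ∫ x in (0:ℝ)..1, u x ^ 2 := by
  obtain ⟨y, dL, dR, hy, hpos, hL, hR, h0, hζL, hζR, h1⟩ := h.exists_isSolutionOn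
  have hdLi := hL.2.1.intervalIntegrable_of_Icc (μ := volume) hζ.1
  have hdRi := hR.2.1.intervalIntegrable_of_Icc (μ := volume) hζ.2
  have hdL2 : IntervalIntegrable (fun x => dL x ^ 2) volume 0 ζ :=
    (hL.2.1.pow 2).intervalIntegrable_of_Icc hζ.1
  have hdR2 : IntervalIntegrable (fun x => dR x ^ 2) volume ζ 1 :=
    (hR.2.1.pow 2).intervalIntegrable_of_Icc hζ.2
  have hG2 : (fun x => (if x ≤ ζ then dL x else dR x) ^ 2)
      = fun x => if x ≤ ζ then dL x ^ 2 else dR x ^ 2 := by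
    simp only [ite_pow]
  have hy2 : IntervalIntegrable (fun x => y x ^ 2) volume 0 1 :=
    (hy.pow 2).intervalIntegrable_of_Icc zero_le_one
  refine ⟨y, fun x => if x ≤ ζ then dL x else dR x,
    ⟨eq_add_integral_ite_le hζ.1 hdLi hdRi (hL.eq_add_integral hζ.1) (hR.eq_add_integral hζ.2),
      (intervalIntegrable_iff_integrableOn_Icc_of_le zero_le_one).1 (hdLi.ite_le hζ.1 hζ.2 hdRi),
      (intervalIntegrable_iff_integrableOn_Icc_of_le zero_le_one).1
        (hG2 ▸ hdL2.ite_le hζ.1 hζ.2 hdR2)⟩,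
    intervalIntegral.intervalIntegral_pos_of_pos_on hy2
      (fun x hx => pow_pos (hpos x (Ioo_subset_Icc_self hx)) 2) zero_lt_one, ?_⟩
  rw [hG2, intervalIntegral.integral_ite_le hζ.1 hζ.2 hdL2 hdR2,
    ← intervalIntegral.integral_add_adjacent_intervals
      (hy2.mono_set (uIcc_subset_uIcc_of_le le_rfl hζ.1 hζ.2))
      (hy2.mono_set (uIcc_subset_uIcc_of_le hζ.1 hζ.2 le_rfl))]
  linear_combination hL.integral_sq_deriv_sub_eq hζ.1 + hR.integral_sq_deriv_sub_eq hζ.2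
    - y 0 * h0 + y ζ / 2 * hζL - y ζ / 2 * hζR + y 1 * h1

theorem mul_integral_sq_le (hμ : -k0 ^ 4 ≤ μ) (hζ : ζ ∈ Ioo (0:ℝ) 1)
    (h : BrokenSol k0 k1 μ ζ) {u g : ℝ → ℝ} (hu : IsTest u g) {z : ℝ} (hz : z ∈ Icc (0:ℝ) 1) :
    μ * (∫ x in (0:ℝ)..1, u x ^ 2)
      ≤ (∫ x in (0:ℝ)..1, g x ^ 2) - u z ^ 2 + k0 ^ 2 * u 0 ^ 2 + k1 ^ 2 * u 1 ^ 2 := by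
  obtain ⟨wL, wR, hL, hR, hL0, hLζ, hRζ, hR1⟩ := h.exists_riccati (Ioo_subset_Icc_self hζ)
  -- If `μ < -1/4`, comparison with the constant solution `1/2` forces `k0 ^ 2 = wL 0 < 1/2`.
  have hμ' : -μ ≤ (1 / 2) ^ 2 := by
    by_contra! hlt
    nlinarith [hL.lt_of_eq_right hζ.1 hlt hLζ, sq_nonneg k0]
  have hLsub := hL.isRiccatiSubsolution hζ.1.le
  have hRsub := hR.isRiccatiSubsolution hζ.2.le
  -- Shifting the weight by `∓1` between `z` and `ζ` keeps it a subsolution since `|w| ≥ 1/2`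
  -- there; the jump of size `1` at `z` produces the term `u z ^ 2`.
  rcases le_total z ζ with hzζ | hζz
  · have hL' : IsRiccatiSubsolution μ (fun x => wL x + -1) 0 ζ :=
      hL.isRiccatiSubsolution_add_const hζ.1.le fun x hx => by
        nlinarith [hL.le_of_eq_right hζ.1.le hμ' hLζ (Ioo_subset_Icc_self hx)]
    have := hu.isTestOn.mul_integral_sq_add_le_of_three hz.1 hzζ hζ.2.le
      (hLsub.mono le_rfl hz.1 hzζ) (hL'.mono hz.1 hzζ le_rfl) hRsub
    simp only [hL0, hLζ, hRζ, hR1] at this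
    linarith
  · have hR' : IsRiccatiSubsolution μ (fun x => wR x + 1) ζ 1 :=
      hR.isRiccatiSubsolution_add_const hζ.2.le fun x hx => by
        nlinarith [hR.le_of_eq_left hζ.2.le (by rwa [neg_sq]) hRζ (Ioo_subset_Icc_self hx)]
    have := hu.isTestOn.mul_integral_sq_add_le_of_three hζ.1.le hζz hz.2
      hLsub (hR'.mono le_rfl hζz hz.2) (hRsub.mono hζz hz.2 le_rfl)
    simp only [hL0, hLζ, hRζ, hR1] at this
    linarith

theorem le_of_mem_rayleighSet (hμ : -k0 ^ 4 ≤ μ) (hζ : ζ ∈ Ioo (0:ℝ) 1)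
    (h : BrokenSol k0 k1 μ ζ) {q : ℝ → ℝ}
    (hq : IntegrableOn q (Icc (0:ℝ) 1)) (hq0 : ∀ᵐ x ∂(volume.restrict (Icc (0:ℝ) 1)), q x ≤ 0)
    (hqm : ∫ x in (0:ℝ)..1, q x = -1) {r : ℝ} (hr : r ∈ RayleighSet k0 k1 q) : μ ≤ r := by
  obtain ⟨u, g, hu, hD, rfl⟩ := hr
  have hu2 : ContinuousOn (fun x => u x ^ 2) (Icc 0 1) := hu.continuousOn.pow 2
  obtain ⟨z, hz, hmax⟩ := isCompact_Icc.exists_isMaxOn ⟨0, left_mem_Icc.2 zero_le_one⟩ hu2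
  have hqu := integral_mul_ge_of_nonpos zero_le_one hq hq0 hu2 fun x hx => hmax hx
  rw [hqm] at hqu
  rw [le_div_iff₀ hD, hu.integral_sq_add_mul_sq hq]
  linarith [h.mul_integral_sq_le hμ hζ hu hz]

theorem le_lam1 (hμ : -k0 ^ 4 ≤ μ) (hζ : ζ ∈ Ioo (0:ℝ) 1)
    (h : BrokenSol k0 k1 μ ζ) {q : ℝ → ℝ}
    (hq : IntegrableOn q (Icc (0:ℝ) 1)) (hq0 : ∀ᵐ x ∂(volume.restrict (Icc (0:ℝ) 1)), q x ≤ 0)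
    (hqm : ∫ x in (0:ℝ)..1, q x = -1) : μ ≤ lam1 k0 k1 q :=
  le_csInf (RayleighSet.nonempty k0 k1 q) fun _ => h.le_of_mem_rayleighSet hμ hζ hq hq0 hqm

theorem exists_lam1_lt (hμ : -k0 ^ 4 ≤ μ) (hζ : ζ ∈ Ioo (0:ℝ) 1)
    (h : BrokenSol k0 k1 μ ζ) {ε : ℝ} (hε : 0 < ε) :
    ∃ q : ℝ → ℝ, IntegrableOn q (Icc (0:ℝ) 1) ∧
      (∀ᵐ x ∂(volume.restrict (Icc (0:ℝ) 1)), q x ≤ 0) ∧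
      (∫ x in (0:ℝ)..1, q x) = -1 ∧ lam1 k0 k1 q < μ + ε := by
  obtain ⟨u, g, hu, hD, hEq⟩ := h.exists_rayleigh_eq (Ioo_subset_Icc_self hζ)
  have hu2 : ContinuousOn (fun x => u x ^ 2) (Icc 0 1) := hu.continuousOn.pow 2
  have hR : Tendsto (fun t => ((∫ x in (0:ℝ)..1, (g x ^ 2 + negBump ζ t x * u x ^ 2))
      + k0 ^ 2 * u 0 ^ 2 + k1 ^ 2 * u 1 ^ 2) / ∫ x in (0:ℝ)..1, u x ^ 2) (𝓝[>] 0) (𝓝 μ) := by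
    have hlim := ((((tendsto_integral_negBump_mul hζ hu2).const_add
      (∫ x in (0:ℝ)..1, g x ^ 2)).add_const (k0 ^ 2 * u 0 ^ 2)).add_const
      (k1 ^ 2 * u 1 ^ 2)).div_const (∫ x in (0:ℝ)..1, u x ^ 2)
    rw [← sub_eq_add_neg, hEq, mul_div_cancel_right₀ _ hD.ne'] at hlim
    exact hlim.congr fun t => by rw [hu.integral_sq_add_mul_sq (integrableOn_negBump ζ t _)]
  obtain ⟨t, ht, hRt⟩ := (Filter.Eventually.and (Ioo_mem_nhdsGT (sub_pos.2 hζ.2))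
    (hR.eventually (gt_mem_nhds (lt_add_of_pos_right μ hε)))).exists
  have hq0 : ∀ᵐ x ∂(volume.restrict (Icc (0:ℝ) 1)), negBump ζ t x ≤ 0 :=
    ae_of_all _ (negBump_nonpos ht.1.le)
  have hqm : ∫ x in (0:ℝ)..1, negBump ζ t x = -1 := by
    simpa [ht.1.ne'] using integral_negBump_mul hζ.1.le ht.1.le (by linarith [ht.2]) fun _ => 1
  have hbdd : BddBelow (RayleighSet k0 k1 (negBump ζ t)) :=
    ⟨μ, fun _ => h.le_of_mem_rayleighSet hμ hζ (integrableOn_negBump ζ t _) hq0 hqm⟩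
  exact ⟨negBump ζ t, integrableOn_negBump ζ t _, hq0, hqm,
    (csInf_le hbdd ⟨u, g, hu, hD, rfl⟩).trans_lt hRt⟩

end BrokenSol

theorem stmt6_general (k0 k1 : ℝ)
    (μ ζ : ℝ) (hμ : -k0 ^ 4 ≤ μ) (hζ : ζ ∈ Ioo (0:ℝ) 1)
    (hsol : BrokenSol k0 k1 μ ζ) :
    sInf { r : ℝ | ∃ q : ℝ → ℝ, IntegrableOn q (Icc (0:ℝ) 1) ∧
        (∀ᵐ x ∂(volume.restrict (Icc (0:ℝ) 1)), q x ≤ 0) ∧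
        (∫ x in (0:ℝ)..1, q x) = -1 ∧ r = lam1 k0 k1 q } = μ ∧
    μ = sInf { r : ℝ | ∃ y g : ℝ → ℝ, IsTest y g ∧ (0 < ∫ x in (0:ℝ)..1, (y x) ^ 2) ∧
          r = ((∫ x in (0:ℝ)..1, (g x) ^ 2) - (y ζ) ^ 2
                + k0 ^ 2 * (y 0) ^ 2 + k1 ^ 2 * (y 1) ^ 2) /
              (∫ x in (0:ℝ)..1, (y x) ^ 2) } := by
  refine ⟨csInf_eq_of_forall_ge_of_forall_gt_exists_lt ?_ ?_ ?_, (IsLeast.csInf_eq ⟨?_, ?_⟩).symm⟩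
  · obtain ⟨q, hq, hq0, hqm, -⟩ := hsol.exists_lam1_lt hμ hζ one_pos
    exact ⟨_, q, hq, hq0, hqm, rfl⟩
  · rintro _ ⟨q, hq, hq0, hqm, rfl⟩
    exact hsol.le_lam1 hμ hζ hq hq0 hqm
  · intro w hw
    obtain ⟨q, hq, hq0, hqm, hlt⟩ := hsol.exists_lam1_lt hμ hζ (sub_pos.2 hw)
    exact ⟨_, ⟨q, hq, hq0, hqm, rfl⟩, by linarith⟩
  · obtain ⟨u, g, hu, hD, hEq⟩ := hsol.exists_rayleigh_eq (Ioo_subset_Icc_self hζ)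
    exact ⟨u, g, hu, hD, by rw [hEq, mul_div_cancel_right₀ _ hD.ne']⟩
  · rintro _ ⟨u, g, hu, hD, rfl⟩
    rw [le_div_iff₀ hD]
    exact hsol.mul_integral_sq_le hμ hζ hu ⟨hζ.1.le, hζ.2.le⟩

theorem stmt6 (k0 k1 : ℝ) (hk0 : 0 ≤ k0) (hk01 : k0 ≤ k1)
    (μ ζ : ℝ) (hμ : -k0 ^ 4 ≤ μ) (hζ : ζ ∈ Ioo (0:ℝ) 1)
    (hsol : BrokenSol k0 k1 μ ζ) :
    sInf { r : ℝ | ∃ q : ℝ → ℝ, IntegrableOn q (Icc (0:ℝ) 1) ∧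
        (∀ᵐ x ∂(volume.restrict (Icc (0:ℝ) 1)), q x ≤ 0) ∧
        (∫ x in (0:ℝ)..1, q x) = -1 ∧ r = lam1 k0 k1 q } = μ ∧
    μ = sInf { r : ℝ | ∃ y g : ℝ → ℝ, IsTest y g ∧ (0 < ∫ x in (0:ℝ)..1, (y x) ^ 2) ∧
          r = ((∫ x in (0:ℝ)..1, (g x) ^ 2) - (y ζ) ^ 2
                + k0 ^ 2 * (y 0) ^ 2 + k1 ^ 2 * (y 1) ^ 2) /
              (∫ x in (0:ℝ)..1, (y x) ^ 2) } :=
  stmt6_general k0 k1 μ ζ hμ hζ hsol
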